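/- arXiv:1304.2794 — 3 statements merged into one kernel-verified Lean document; each statement's English description precedes it below -/
import Mathlib

section
/- Let σ, τ > 0 and let a_σ ∈ H_σ. If τ ≥ σ, the future causal shadow (a_σ + V̄) ∩ H_τ of a_σ on H_τ is exactly the closed hyperbolic ball {a ∈ H_τ : d_τ(a, a_τ) ≤ τ·c_{σ,τ}} centered at a_τ = (τ/σ)·a_σ, where c_{σ,τ} = arcosh((σ² + τ²)/(2στ)) and d_τ(a,b) = τ·arcosh(⟨a,b⟩/τ²). -/
/-! The future causal shadow of `a_σ` on `H_τ` is cut out by `⟨a - a_σ, a - a_σ⟩ ≥ 0`, i.e. by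
`⟨a, a_σ⟩ ≤ (σ² + τ²)/2`; the time-orientation condition comes for free, since a past-directed
`a_σ - a` would force `⟨a, a_σ⟩ > ⟨a, a⟩ = τ² ≥ σ²`. Rescaling `a_σ` to `a_τ` and applying the
increasing function `arcosh` turns this bound on `⟨a, a_σ⟩` into the bound on `d_τ(a, a_τ)`. -/

noncomputable section

open scoped RealInnerProductSpace

abbrev E3 := EuclideanSpace ℝ (Fin 3)

def Hyp (τ : ℝ) : Set (ℝ × E3) := {x | x.1 = Real.sqrt (‖x.2‖ ^ 2 + τ ^ 2)}

/-- The closed forward light cone. -/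
def Vbar : Set (ℝ × E3) := {x | ‖x.2‖ ≤ x.1}

/-- Inverse hyperbolic cosine. -/
def arcosh (x : ℝ) : ℝ := Real.log (x + Real.sqrt (x ^ 2 - 1))

/-- The Minkowski inner product. -/
def mink (a b : ℝ × E3) : ℝ := a.1 * b.1 - ⟪a.2, b.2⟫

/-- The hyperbolic distance `d_τ(a,b) = τ·arcosh(⟨a,b⟩/τ²)` on `H_τ`. -/
def dHyp (τ : ℝ) (a b : ℝ × E3) : ℝ := τ * arcosh (mink a b / τ ^ 2)

theorem arcosh_eq_real_arcosh : arcosh = Real.arcosh := rfl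

section Minkowski

variable {u v w : ℝ × E3}

theorem mink_self (v : ℝ × E3) : mink v v = v.1 ^ 2 - ‖v.2‖ ^ 2 := by
  rw [mink, real_inner_self_eq_norm_sq]
  ring

theorem mink_neg_neg (v : ℝ × E3) : mink (-v) (-v) = mink v v := by
  simp [mink]

theorem mink_sub_right (u x y : ℝ × E3) : mink u (x - y) = mink u x - mink u y := by
  simp only [mink, Prod.fst_sub, Prod.snd_sub, inner_sub_right]
  ring

theorem mink_smul_right (u : ℝ × E3) (c : ℝ) (x : ℝ × E3) : mink u (c • x) = c * mink u x := by
  simp only [mink, Prod.smul_fst, Prod.smul_snd, real_inner_smul_right, smul_eq_mul]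
  ring

theorem mink_sub_self (x y : ℝ × E3) :
    mink (x - y) (x - y) = mink x x - 2 * mink x y + mink y y := by
  simp only [mink, Prod.fst_sub, Prod.snd_sub, inner_sub_left, inner_sub_right,
    real_inner_comm x.2 y.2]
  ring

theorem mem_Vbar_iff : v ∈ Vbar ↔ 0 ≤ v.1 ∧ 0 ≤ mink v v := by
  rw [mink_self, sub_nonneg]
  refine ⟨fun h => ⟨(norm_nonneg _).trans h, pow_le_pow_left₀ (norm_nonneg _) h 2⟩,
    fun ⟨h0, h⟩ => (pow_le_pow_iff_left₀ (norm_nonneg _) h0 two_ne_zero).mp h⟩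

theorem mink_pos_of_norm_lt (hu : ‖u.2‖ < u.1) (hw : w ∈ Vbar) (hw0 : 0 < w.1) :
    0 < mink u w := by
  refine sub_pos.mpr ?_
  calc ⟪u.2, w.2⟫ ≤ ‖u.2‖ * ‖w.2‖ := real_inner_le_norm _ _
    _ ≤ ‖u.2‖ * w.1 := mul_le_mul_of_nonneg_left hw (norm_nonneg _)
    _ < u.1 * w.1 := mul_lt_mul_of_pos_right hu hw0

end Minkowski

section Hyperboloid

variable {ρ σ τ : ℝ} {x y : ℝ × E3}

theorem mink_self_of_mem_Hyp (hx : x ∈ Hyp ρ) : mink x x = ρ ^ 2 := by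
  rw [mink_self, show x.1 = _ from hx, Real.sq_sqrt (by positivity)]
  ring

theorem norm_snd_lt_fst_of_mem_Hyp (hρ : ρ ≠ 0) (hx : x ∈ Hyp ρ) : ‖x.2‖ < x.1 := by
  rw [show x.1 = _ from hx, Real.lt_sqrt (norm_nonneg _)]
  have := pow_pos (abs_pos.mpr hρ) 2
  rw [sq_abs] at this
  linarith

theorem fst_pos_of_mem_Hyp (hρ : ρ ≠ 0) (hx : x ∈ Hyp ρ) : 0 < x.1 :=
  (norm_nonneg _).trans_lt (norm_snd_lt_fst_of_mem_Hyp hρ hx)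

theorem sub_mem_Vbar_iff_mink_le (hτ : τ ≠ 0) (hστ : σ ^ 2 ≤ τ ^ 2) (hx : x ∈ Hyp σ)
    (hy : y ∈ Hyp τ) : y - x ∈ Vbar ↔ mink y x ≤ (σ ^ 2 + τ ^ 2) / 2 := by
  have hself : mink (y - x) (y - x) = σ ^ 2 + τ ^ 2 - 2 * mink y x := by
    rw [mink_sub_self, mink_self_of_mem_Hyp hx, mink_self_of_mem_Hyp hy]
    ring
  rw [mem_Vbar_iff, hself]
  refine ⟨fun h => by linarith [h.2], fun h => ⟨?_, by linarith⟩⟩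
  by_contra! hpast
  have hxy : x - y ∈ Vbar := by
    rw [mem_Vbar_iff, ← neg_sub, mink_neg_neg, hself, Prod.fst_neg]
    constructor <;> linarith
  have hpos := mink_pos_of_norm_lt (norm_snd_lt_fst_of_mem_Hyp hτ hy) hxy
    (by rw [← neg_sub, Prod.fst_neg]; linarith)
  rw [mink_sub_right, mink_self_of_mem_Hyp hy] at hpos
  linarith

end Hyperboloid

/-- For `τ ≥ σ > 0` and `a_σ ∈ H_σ`, the future causal shadow of `a_σ` on `H_τ` is the
closed hyperbolic ball of radius `τ·arcosh((σ²+τ²)/(2στ))` about `a_τ = (τ/σ)·a_σ`. -/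
theorem stmt6 (σ τ : ℝ) (hσ : 0 < σ) (hτ : 0 < τ) (hle : σ ≤ τ)
    (aσ : ℝ × E3) (haσ : aσ ∈ Hyp σ) :
    {a ∈ Hyp τ | a - aσ ∈ Vbar} =
      {a ∈ Hyp τ | dHyp τ a ((τ / σ) • aσ) ≤ τ * arcosh ((σ ^ 2 + τ ^ 2) / (2 * σ * τ))} := by
  refine Set.sep_ext_iff.mpr fun a ha => ?_
  have hστ : 0 < σ * τ := mul_pos hσ hτ
  have hm : 0 < mink a aσ := mink_pos_of_norm_lt (norm_snd_lt_fst_of_mem_Hyp hτ.ne' ha)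
    (norm_snd_lt_fst_of_mem_Hyp hσ.ne' haσ).le (fst_pos_of_mem_Hyp hσ.ne' haσ)
  have hdist : mink a ((τ / σ) • aσ) / τ ^ 2 = mink a aσ / (σ * τ) := by
    rw [mink_smul_right]
    field_simp
  have hradius : (σ ^ 2 + τ ^ 2) / (2 * σ * τ) = (σ ^ 2 + τ ^ 2) / 2 / (σ * τ) := by
    field_simp
  rw [sub_mem_Vbar_iff_mink_le hτ.ne' (pow_le_pow_left₀ hσ.le hle 2) haσ ha, dHyp,
    mul_le_mul_iff_right₀ hτ, hdist, hradius, arcosh_eq_real_arcosh,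
    Real.arcosh_le_arcosh (by positivity) (by positivity), div_le_div_iff_of_pos_right hστ]
end
end

section
/- Let K₁ and K₂ be pointed open convex cones contained in the open unit ball B ⊂ ℝ³ (truncated cones with apex in B and base on the boundary sphere), and let C(K₁), C(K₂) ⊂ V be the corresponding hypercones, i.e. causal completions in the forward light cone of the hyperbolic cones on a fixed hyperboloid H determined by K₁ and K₂. Then C(K₁) and C(K₂) are spacelike separated in V if and only if K₁ ∩ K₂ = ∅. -/
noncomputable section

open scoped RealInnerProductSpace

/-- The open forward light cone `V`. -/
def Vcone : Set (ℝ × E3) := {x | ‖x.2‖ < x.1}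

/-- The Minkowski quadratic form `x² = x₀² − |𝐱|²`. -/
def minkQ (x : ℝ × E3) : ℝ := x.1 ^ 2 - ‖x.2‖ ^ 2

/-- The fixed hyperboloid `H` (here with τ = 1) inside `V`. -/
def Hyp1 : Set (ℝ × E3) := {x | x.1 = Real.sqrt (‖x.2‖ ^ 2 + 1)}

/-- The Beltrami–Klein projection. -/
def klein (a : ℝ × E3) : E3 := a.1⁻¹ • a.2

/-- The truncated cone in the unit ball with apex `a` and boundary set `L ⊂ S²`:
the union of the open segments from `a` to the points of `L`. -/
def segCone (a : E3) (L : Set E3) : Set E3 :=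
  {x | ∃ l ∈ L, ∃ t ∈ Set.Ioo (0 : ℝ) 1, x = a + t • (l - a)}

/-- A pointed open convex truncated cone in the open unit ball. -/
def IsTruncCone (K : Set E3) : Prop :=
  IsOpen K ∧ Convex ℝ K ∧
    ∃ a : E3, ‖a‖ < 1 ∧ ∃ L : Set E3, (∀ l ∈ L, ‖l‖ = 1) ∧ K = segCone a L

/-- The hypercone `C(K) ⊂ V`: the causal completion in `V` of the hyperbolic cone on
`H` corresponding to `K`, i.e. the points of `V` whose causal influence meets `H`
only inside the hyperbolic cone. -/
def hypCone (K : Set E3) : Set (ℝ × E3) :=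
  {x ∈ Vcone | ∀ y ∈ Hyp1, 0 ≤ minkQ (x - y) → klein y ∈ K}

/-! A point of `H` is causally related to no other point of `H`, so for `k ∈ K₁ ∩ K₂` the point
of `H` over `k` lies in both hypercones and is not spacelike to itself. Conversely, if
`x ∈ C(K₁)` and `y ∈ C(K₂)` are causally related, the line through them is causal and meets `H`
in a point `z` causally related to both, so that `klein z ∈ K₁ ∩ K₂`. -/

def minkInner (u v : ℝ × E3) : ℝ := u.1 * v.1 - ⟪u.2, v.2⟫

lemma minkQ_neg (u : ℝ × E3) : minkQ (-u) = minkQ u := by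
  simp [minkQ]

lemma minkQ_smul (c : ℝ) (u : ℝ × E3) : minkQ (c • u) = c ^ 2 * minkQ u := by
  simp only [minkQ, Prod.smul_fst, Prod.smul_snd, smul_eq_mul, norm_smul, Real.norm_eq_abs,
    mul_pow, sq_abs]
  ring

lemma minkQ_add_smul (u v : ℝ × E3) (s : ℝ) :
    minkQ (u + s • v) = minkQ u + 2 * s * minkInner u v + s ^ 2 * minkQ v := by
  simp only [minkQ, minkInner, Prod.fst_add, Prod.snd_add, Prod.smul_fst, Prod.smul_snd,
    smul_eq_mul, norm_add_sq_real, real_inner_smul_right, norm_smul, Real.norm_eq_abs, mul_pow,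
    sq_abs]
  ring

lemma minkInner_add_smul_left (u v : ℝ × E3) (s : ℝ) :
    minkInner (u + s • v) v = minkInner u v + s * minkQ v := by
  simp only [minkInner, minkQ, Prod.fst_add, Prod.snd_add, Prod.smul_fst, Prod.smul_snd,
    smul_eq_mul, inner_add_left, real_inner_smul_left, real_inner_self_eq_norm_sq]
  ring

lemma minkQ_nonneg_of_norm_le {u : ℝ × E3} (hu : ‖u.2‖ ≤ u.1) : 0 ≤ minkQ u := by
  unfold minkQ
  nlinarith [norm_nonneg u.2]

lemma minkInner_nonneg_of_norm_le {u v : ℝ × E3} (hu : ‖u.2‖ ≤ u.1) (hv : ‖v.2‖ ≤ v.1) :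
    0 ≤ minkInner u v := by
  have := real_inner_le_norm u.2 v.2
  unfold minkInner
  nlinarith [norm_nonneg u.2, norm_nonneg v.2]

lemma minkInner_pos {u v : ℝ × E3} (hu : u ∈ Vcone) (hv : ‖v.2‖ ≤ v.1) (hv₀ : 0 < v.1) :
    0 < minkInner u v := by
  have hu : ‖u.2‖ < u.1 := hu
  have := real_inner_le_norm u.2 v.2
  unfold minkInner
  nlinarith [norm_nonneg u.2, norm_nonneg v.2]

lemma minkQ_mul_minkQ_le_minkInner_sq {u v : ℝ × E3} (hu : ‖u.2‖ ≤ u.1) (hv : ‖v.2‖ ≤ v.1) :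
    minkQ u * minkQ v ≤ minkInner u v ^ 2 := by
  have hcs := real_inner_le_norm u.2 v.2
  have hnn : 0 ≤ u.1 * v.1 - ‖u.2‖ * ‖v.2‖ := by
    nlinarith [norm_nonneg u.2, norm_nonneg v.2]
  calc minkQ u * minkQ v ≤ (u.1 * v.1 - ‖u.2‖ * ‖v.2‖) ^ 2 := by
        unfold minkQ; nlinarith [sq_nonneg (u.1 * ‖v.2‖ - ‖u.2‖ * v.1)]
    _ ≤ minkInner u v ^ 2 := by
        unfold minkInner; gcongr

lemma mem_Hyp1_iff {z : ℝ × E3} : z ∈ Hyp1 ↔ minkQ z = 1 ∧ 0 < z.1 := by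
  have hpos : (0 : ℝ) < ‖z.2‖ ^ 2 + 1 := by positivity
  constructor
  · intro hz
    have hz : z.1 = √(‖z.2‖ ^ 2 + 1) := hz
    refine ⟨?_, hz ▸ Real.sqrt_pos.2 hpos⟩
    rw [minkQ, hz, Real.sq_sqrt hpos.le]
    ring
  · rintro ⟨hQ, hz⟩
    show z.1 = √(‖z.2‖ ^ 2 + 1)
    rw [← Real.sqrt_sq hz.le]
    congr 1
    rw [minkQ] at hQ
    linarith

lemma Hyp1_subset_Vcone : Hyp1 ⊆ Vcone := by
  intro z hz
  obtain ⟨hQ, hz₀⟩ := mem_Hyp1_iff.1 hz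
  show ‖z.2‖ < z.1
  rw [minkQ] at hQ
  nlinarith [norm_nonneg z.2]

lemma eq_of_mem_Hyp1_of_minkQ_sub_nonneg {z y : ℝ × E3} (hz : z ∈ Hyp1) (hy : y ∈ Hyp1)
    (h : 0 ≤ minkQ (z - y)) : z = y := by
  obtain ⟨hzQ, -⟩ := mem_Hyp1_iff.1 hz
  obtain ⟨hyQ, -⟩ := mem_Hyp1_iff.1 hy
  have hz' : ‖z.2‖ < z.1 := Hyp1_subset_Vcone hz
  have hy' : ‖y.2‖ < y.1 := Hyp1_subset_Vcone hy
  simp only [minkQ, Prod.fst_sub, Prod.snd_sub] at h hzQ hyQ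
  have hnorm := abs_norm_sub_norm_le z.2 y.2
  have hsq : (‖z.2‖ - ‖y.2‖) ^ 2 ≤ ‖z.2 - y.2‖ ^ 2 :=
    sq_le_sq' (abs_le.1 hnorm).1 (abs_le.1 hnorm).2
  -- `|z₀ - y₀| (z₀ + y₀) = |‖𝐳‖² - ‖𝐲‖²| ≤ ‖𝐳 - 𝐲‖ (‖𝐳‖ + ‖𝐲‖)` while `‖𝐳‖ + ‖𝐲‖ < z₀ + y₀`
  have h2 : z.2 = y.2 := by
    have : ‖z.2 - y.2‖ ^ 2 * ((z.1 + y.1) ^ 2 - (‖z.2‖ + ‖y.2‖) ^ 2) ≤ 0 := by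
      nlinarith [mul_le_mul_of_nonneg_right hsq (sq_nonneg (‖z.2‖ + ‖y.2‖)),
        mul_le_mul_of_nonneg_right h (sq_nonneg (z.1 + y.1))]
    have hgap : 0 < (z.1 + y.1) ^ 2 - (‖z.2‖ + ‖y.2‖) ^ 2 := by
      nlinarith [norm_nonneg z.2, norm_nonneg y.2]
    have : ‖z.2 - y.2‖ ^ 2 ≤ 0 := nonpos_of_mul_nonpos_left this hgap
    rw [← sub_eq_zero, ← norm_eq_zero]
    nlinarith [norm_nonneg (z.2 - y.2)]
  exact Prod.ext (by rw [hz, hy, h2]) h2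

lemma exists_mem_Hyp1_klein_eq {k : E3} (hk : ‖k‖ < 1) : ∃ z ∈ Hyp1, klein z = k := by
  have hr : 0 < 1 - ‖k‖ ^ 2 := by nlinarith [norm_nonneg k]
  set c := (√(1 - ‖k‖ ^ 2))⁻¹
  have hc : 0 < c := inv_pos.2 (Real.sqrt_pos.2 hr)
  refine ⟨c • (1, k), mem_Hyp1_iff.2 ⟨?_, by simpa using hc⟩, ?_⟩
  · rw [minkQ_smul, inv_pow, Real.sq_sqrt hr.le]
    simp only [minkQ, one_pow]
    field_simp
  · simp [klein, smul_smul, hc.ne']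

lemma mem_hypCone_of_mem_Hyp1 {K : Set E3} {z : ℝ × E3} (hz : z ∈ Hyp1) (hk : klein z ∈ K) :
    z ∈ hypCone K :=
  ⟨Hyp1_subset_Vcone hz, fun _ hy h ↦ eq_of_mem_Hyp1_of_minkQ_sub_nonneg hz hy h ▸ hk⟩

lemma exists_quadratic_eq_one_and_pos {q B D : ℝ} (hB : 0 < B) (hD : 0 ≤ D)
    (hqD : q * D ≤ B ^ 2) :
    ∃ s, q + 2 * s * B + s ^ 2 * D = 1 ∧ 0 < B + s * D := by
  have hΔ : 0 < B ^ 2 + (1 - q) * D := by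
    rcases hD.lt_or_eq with hD | rfl
    · nlinarith
    · simpa using pow_pos hB 2
  obtain ⟨r, hr₀, hr⟩ : ∃ r : ℝ, 0 < r ∧ r ^ 2 = B ^ 2 + (1 - q) * D :=
    ⟨_, Real.sqrt_pos.2 hΔ, Real.sq_sqrt hΔ.le⟩
  -- the root `(r - B) / D`, rationalised so that it stays valid when `D = 0`
  refine ⟨(1 - q) / (B + r), ?_, ?_⟩
  · field_simp
    linear_combination (q - 1) * hr
  · have : B + (1 - q) / (B + r) * D = r := by
      field_simp
      linear_combination -hr
    rwa [this]

lemma exists_add_smul_mem_Hyp1 {y d : ℝ × E3} (hy : y ∈ Vcone) (hd : ‖d.2‖ ≤ d.1)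
    (hd₀ : 0 < d.1) : ∃ s : ℝ, y + s • d ∈ Hyp1 := by
  obtain ⟨s, hs, hsB⟩ := exists_quadratic_eq_one_and_pos (minkInner_pos hy hd hd₀)
    (minkQ_nonneg_of_norm_le hd) (minkQ_mul_minkQ_le_minkInner_sq (le_of_lt hy) hd)
  set z := y + s • d
  have hzQ : minkQ z = 1 := by rw [minkQ_add_smul]; linarith
  refine ⟨s, mem_Hyp1_iff.2 ⟨hzQ, ?_⟩⟩
  -- a timelike `z` in the past cone would pair nonpositively with the future vector `d`
  by_contra! hz
  have hpast : ‖(-z).2‖ ≤ (-z).1 := by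
    simp only [minkQ] at hzQ
    simp only [Prod.fst_neg, Prod.snd_neg, norm_neg]
    nlinarith [norm_nonneg z.2]
  have := minkInner_nonneg_of_norm_le hpast hd
  rw [← minkInner_add_smul_left] at hsB
  simp only [minkInner, Prod.fst_neg, Prod.snd_neg, inner_neg_left] at this hsB
  linarith

lemma exists_mem_Hyp1_causal {x y : ℝ × E3} (hx : x ∈ Vcone) (hy : y ∈ Vcone)
    (h : 0 ≤ minkQ (x - y)) : ∃ z ∈ Hyp1, 0 ≤ minkQ (x - z) ∧ 0 ≤ minkQ (y - z) := by
  wlog hxy : 0 ≤ (x - y).1 generalizing x y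
  · obtain ⟨z, hz, hyz, hxz⟩ := this hy hx (by rwa [← neg_sub, minkQ_neg])
      (by simp only [Prod.fst_sub] at hxy ⊢; linarith)
    exact ⟨z, hz, hxz, hyz⟩
  obtain ⟨d, t, hd, hd₀, hxyd⟩ :
      ∃ (d : ℝ × E3) (t : ℝ), ‖d.2‖ ≤ d.1 ∧ 0 < d.1 ∧ x - y = t • d := by
    rcases hxy.lt_or_eq with hpos | hzero
    · refine ⟨x - y, 1, ?_, hpos, (one_smul _ _).symm⟩
      simp only [minkQ] at h
      nlinarith [norm_nonneg (x - y).2]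
    · have : (x - y).2 = 0 := by
        simp only [minkQ, ← hzero] at h
        exact norm_eq_zero.1 (by nlinarith [norm_nonneg (x - y).2])
      exact ⟨y, 0, le_of_lt hy, (norm_nonneg _).trans_lt hy,
        by rw [zero_smul]; exact Prod.ext hzero.symm this⟩
  obtain ⟨s, hs⟩ := exists_add_smul_mem_Hyp1 hy hd hd₀
  have hdQ := minkQ_nonneg_of_norm_le hd
  refine ⟨y + s • d, hs, ?_, ?_⟩
  · rw [show x - (y + s • d) = (t - s) • d by rw [sub_add_eq_sub_sub, hxyd, sub_smul],
      minkQ_smul]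
    positivity
  · rw [show y - (y + s • d) = (-s) • d by rw [sub_add_cancel_left, neg_smul], minkQ_smul]
    positivity

lemma IsTruncCone.norm_lt_one {K : Set E3} (hK : IsTruncCone K) {k : E3} (hk : k ∈ K) :
    ‖k‖ < 1 := by
  obtain ⟨-, -, a, ha, L, hL, rfl⟩ := hK
  obtain ⟨l, hl, t, ⟨ht₀, ht₁⟩, rfl⟩ := hk
  calc ‖a + t • (l - a)‖ = ‖(1 - t) • a + t • l‖ := by congr 1; module
    _ ≤ (1 - t) * ‖a‖ + t * ‖l‖ := by
        refine (norm_add_le _ _).trans_eq ?_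
        rw [norm_smul, norm_smul, Real.norm_of_nonneg (by linarith), Real.norm_of_nonneg ht₀.le]
    _ < 1 := by rw [hL l hl]; nlinarith

theorem stmt7_general (K₁ K₂ : Set E3) (h₁ : IsTruncCone K₁) :
    (∀ x ∈ hypCone K₁, ∀ y ∈ hypCone K₂, minkQ (x - y) < 0) ↔ K₁ ∩ K₂ = ∅ := by
  constructor
  · intro hsep
    refine Set.eq_empty_of_forall_notMem fun k ⟨hk₁, hk₂⟩ ↦ ?_
    obtain ⟨z, hz, rfl⟩ := exists_mem_Hyp1_klein_eq (h₁.norm_lt_one hk₁)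
    have := hsep z (mem_hypCone_of_mem_Hyp1 hz hk₁) z (mem_hypCone_of_mem_Hyp1 hz hk₂)
    simp [minkQ] at this
  · intro hdisj x hx y hy
    by_contra! h
    obtain ⟨z, hz, hxz, hyz⟩ := exists_mem_Hyp1_causal hx.1 hy.1 h
    exact hdisj.subset ⟨hx.2 z hz hxz, hy.2 z hz hyz⟩

/-- Two hypercones are spacelike separated iff the underlying cones in the ball
are disjoint. -/
theorem stmt7 (K₁ K₂ : Set E3) (h₁ : IsTruncCone K₁) (h₂ : IsTruncCone K₂) :
    (∀ x ∈ hypCone K₁, ∀ y ∈ hypCone K₂, minkQ (x - y) < 0) ↔ K₁ ∩ K₂ = ∅ :=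
  stmt7_general K₁ K₂ h₁
end
end

section
/- Let K ⊂ B be a truncated pointed open convex cone and O ⊂ B \ K an open convex set with compact closure in B (disjoint from K). Then there exists a truncated pointed open convex cone K₀ ⊂ B with O ⊂ K₀ and K₀ ∩ K = ∅. -/
noncomputable section

/-- The open cone from apex `a` over `O`. -/
def apexCone (a : E3) (O : Set E3) : Set E3 :=
  {x | ∃ o ∈ O, ∃ s : ℝ, 0 < s ∧ x = a + s • (o - a)}

lemma apexCone_open (a : E3) (O : Set E3) (hO : IsOpen O) : IsOpen (apexCone a O) := by
  have : apexCone a O = ⋃ s ∈ Set.Ioi (0:ℝ), (fun o => a + s • (o - a)) '' O := by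
    ext x
    simp only [apexCone, Set.mem_setOf_eq, Set.mem_iUnion, Set.mem_image, Set.mem_Ioi]
    constructor
    · rintro ⟨o, ho, s, hs, rfl⟩; exact ⟨s, hs, o, ho, rfl⟩
    · rintro ⟨s, hs, o, ho, rfl⟩; exact ⟨o, ho, s, hs, rfl⟩
  rw [this]
  refine isOpen_biUnion fun s hs => ?_
  have hmap : IsOpenMap (fun o : E3 => a + s • (o - a)) := by
    have h1 : IsOpenMap (fun o : E3 => o - a) := isOpenMap_sub_right a
    have h2 : IsOpenMap (fun o : E3 => s • o) := isOpenMap_smul₀ (ne_of_gt hs)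
    have h3 : IsOpenMap (fun o : E3 => a + o) := isOpenMap_add_left a
    exact (h3.comp h2).comp h1
  exact hmap O hO

lemma apexCone_convex (a : E3) (O : Set E3) (hO : Convex ℝ O) : Convex ℝ (apexCone a O) := by
  rintro x ⟨o₁, ho₁, s₁, hs₁, rfl⟩ y ⟨o₂, ho₂, s₂, hs₂, rfl⟩ p q hp hq hpq
  have hσ : 0 < p * s₁ + q * s₂ := by
    rcases eq_or_lt_of_le hp with h | h
    · have hq1 : q = 1 := by linarith
      rw [← h, hq1]; simpa using hs₂
    · nlinarith [mul_nonneg hq hs₂.le, mul_pos h hs₁]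
  refine ⟨(p * s₁ / (p * s₁ + q * s₂)) • o₁ + (q * s₂ / (p * s₁ + q * s₂)) • o₂,
    hO ho₁ ho₂ (by positivity) (by positivity) (by field_simp), p * s₁ + q * s₂, hσ, ?_⟩
  have hq' : q = 1 - p := by linarith
  subst hq'
  match_scalars <;> field_simp <;> ring

lemma mem_apexCone_self (a : E3) (O : Set E3) (o : E3) (ho : o ∈ O) : o ∈ apexCone a O :=
  ⟨o, ho, 1, one_pos, by simp⟩

/-- Key construction lemma: the truncated cone over `O` from apex `a`. -/
lemma key (O : Set E3) (hOconv : Convex ℝ O) (hOopen : IsOpen O)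
    (hOb : O ⊆ Metric.ball (0 : E3) 1) (a : E3) (ha : ‖a‖ < 1) (haO : a ∉ O) :
    IsTruncCone (apexCone a O ∩ Metric.ball (0 : E3) 1) ∧
      O ⊆ apexCone a O ∩ Metric.ball (0 : E3) 1 := by
  constructor
  · refine ⟨(apexCone_open a O hOopen).inter Metric.isOpen_ball,
      (apexCone_convex a O hOconv).inter (convex_ball 0 1), a, ha,
      apexCone a O ∩ Metric.sphere 0 1, fun l hl => by simpa using hl.2, ?_⟩
    ext x
    constructor
    · rintro ⟨⟨o, ho, s, hs, rfl⟩, hxb⟩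
      -- extend the ray to the sphere
      have hoa : o - a ≠ 0 := by
        intro h
        exact haO (by rwa [sub_eq_zero] at h ▸ ho)
      set v := o - a with hv
      have hvne : v ≠ 0 := hoa
      have hvpos : 0 < ‖v‖ := norm_pos_iff.mpr hvne
      set R : ℝ := s + (1 + ‖a‖) / ‖v‖ with hR
      have hgR : 1 ≤ ‖a + R • v‖ := by
        have h1 : ‖R • v‖ ≤ ‖a + R • v‖ + ‖a‖ := by
          calc ‖R • v‖ = ‖(a + R • v) - a‖ := by rw [add_sub_cancel_left]
            _ ≤ ‖a + R • v‖ + ‖a‖ := norm_sub_le _ _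
        have h2 : ‖R • v‖ = R * ‖v‖ := by
          rw [norm_smul, Real.norm_eq_abs, abs_of_pos]
          positivity
        have h3 : R * ‖v‖ = s * ‖v‖ + (1 + ‖a‖) := by
          rw [hR]; field_simp
        nlinarith [mul_nonneg hs.le hvpos.le]
      have hgs : ‖a + s • v‖ < 1 := by simpa using hxb
      have hcont : ContinuousOn (fun r : ℝ => ‖a + r • v‖) (Set.Icc s R) := by
        fun_prop
      have hsR : s ≤ R := by
        have h0 : 0 ≤ (1 + ‖a‖) / ‖v‖ := by positivity
        rw [hR]; linarith
      have h1mem : (1 : ℝ) ∈ Set.Icc ‖a + s • v‖ ‖a + R • v‖ := ⟨hgs.le, hgR⟩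
      obtain ⟨s', hs'mem, hs'⟩ := intermediate_value_Icc hsR hcont h1mem
      have hss' : s < s' := by
        rcases lt_or_eq_of_le hs'mem.1 with h | h
        · exact h
        · exfalso
          have h2 : ‖a + s • v‖ = 1 := by rw [h]; simpa using hs'
          linarith
      have hs'pos : 0 < s' := lt_trans hs hss'
      refine ⟨a + s' • v, ⟨⟨o, ho, s', hs'pos, rfl⟩, by simpa using hs'⟩,
        s / s', ⟨by positivity, (div_lt_one hs'pos).mpr hss'⟩, ?_⟩
      have : (s / s') • (s' • v) = s • v := by
        rw [smul_smul, div_mul_cancel₀]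
        exact ne_of_gt hs'pos
      rw [add_sub_cancel_left, this]
    · rintro ⟨l, ⟨⟨o, ho, s, hs, rfl⟩, hl⟩, t, ht, rfl⟩
      have hln : ‖a + s • (o - a)‖ = 1 := by simpa using hl
      constructor
      · exact ⟨o, ho, t * s, mul_pos ht.1 hs, by rw [add_sub_cancel_left, smul_smul]⟩
      · rw [Metric.mem_ball, dist_zero_right]
        have heq : a + t • (a + s • (o - a) - a) = (1 - t) • a + t • (a + s • (o - a)) := by
          module
        rw [heq]
        calc ‖(1 - t) • a + t • (a + s • (o - a))‖
            ≤ ‖(1 - t) • a‖ + ‖t • (a + s • (o - a))‖ := norm_add_le _ _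
          _ = (1 - t) * ‖a‖ + t * 1 := by
              rw [norm_smul, norm_smul, Real.norm_eq_abs, Real.norm_eq_abs,
                abs_of_pos ht.1, abs_of_pos (by linarith [ht.2] : (0:ℝ) < 1 - t), hln]
          _ < (1 - t) * 1 + t * 1 := by
              have h1t : (0:ℝ) < 1 - t := by linarith [ht.2]
              nlinarith
          _ = 1 := by ring
  · exact fun o ho => ⟨mem_apexCone_self a O o ho, hOb ho⟩

/-- Given a truncated cone `K` and an open convex relatively compact set `O` in the
unit ball disjoint from `K`, there is a truncated cone `K₀ ⊇ O` disjoint from `K`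
(Fact A.4). -/
theorem stmt11 (K O : Set E3) (hK : IsTruncCone K)
    (hO : O ⊆ Metric.ball (0 : E3) 1 \ K) (hOconv : Convex ℝ O) (hOopen : IsOpen O)
    (hOc : IsCompact (closure O)) (hOb : closure O ⊆ Metric.ball (0 : E3) 1) :
    ∃ K₀ : Set E3, IsTruncCone K₀ ∧ O ⊆ K₀ ∧ K₀ ∩ K = ∅ := by
  rcases O.eq_empty_or_nonempty with rfl | ⟨o₀, ho₀⟩
  · refine ⟨∅, ⟨isOpen_empty, convex_empty, 0, by simp, ∅, by simp, ?_⟩, by simp, by simp⟩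
    ext x; simp [segCone]
  rcases K.eq_empty_or_nonempty with rfl | ⟨k₀, hk₀⟩
  · -- K empty: pick apex outside closure O
    obtain ⟨x₀, hx₀c, hx₀max⟩ := hOc.exists_isMaxOn ⟨o₀, subset_closure ho₀⟩
      (continuous_norm.continuousOn)
    set m := ‖x₀‖ with hm
    have hm1 : m < 1 := by
      have := hOb hx₀c; rwa [Metric.mem_ball, dist_zero_right] at this
    have hm0 : 0 ≤ m := norm_nonneg _
    set a : E3 := EuclideanSpace.single 0 ((1 + m) / 2) with haa
    have hna : ‖a‖ = (1 + m) / 2 := by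
      rw [haa, EuclideanSpace.norm_single, Real.norm_eq_abs, abs_of_pos]; linarith
    have ha1 : ‖a‖ < 1 := by rw [hna]; linarith
    have haO : a ∉ O := by
      intro h
      have := hx₀max (subset_closure h)
      simp only [Set.mem_setOf_eq] at this
      rw [hna] at this
      linarith [this]
    obtain ⟨h1, h2⟩ := key O hOconv hOopen (fun o ho => (hO ho).1) a ha1 haO
    exact ⟨_, h1, h2, by simp⟩
  · -- general case: separate
    have hdisj : Disjoint O K := Set.disjoint_left.mpr fun x hx => (hO hx).2
    obtain ⟨f, c, hfO, hfK⟩ := geometric_hahn_banach_open hOconv hOopen hK.2.1 hdisj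
    -- K ⊆ ball
    have hKb : K ⊆ Metric.ball (0 : E3) 1 := by
      obtain ⟨_, _, b, hb, L, hL, rfl⟩ := hK
      rintro x ⟨l, hl, t, ht, rfl⟩
      rw [Metric.mem_ball, dist_zero_right]
      have heq : b + t • (l - b) = (1 - t) • b + t • l := by module
      rw [heq]
      calc ‖(1 - t) • b + t • l‖ ≤ ‖(1 - t) • b‖ + ‖t • l‖ := norm_add_le _ _
        _ = (1 - t) * ‖b‖ + t * 1 := by
            rw [norm_smul, norm_smul, Real.norm_eq_abs, Real.norm_eq_abs,
              abs_of_pos ht.1, abs_of_pos (by linarith [ht.2] : (0:ℝ) < 1 - t), hL l hl]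
        _ < (1 - t) * 1 + t * 1 := by nlinarith [ht.1, ht.2]
        _ = 1 := by ring
    -- find apex a on the hyperplane, inside the ball
    have ho₀b : ‖o₀‖ < 1 := by
      have := (hO ho₀).1; rwa [Metric.mem_ball, dist_zero_right] at this
    have hk₀b : ‖k₀‖ < 1 := by
      have := hKb hk₀; rwa [Metric.mem_ball, dist_zero_right] at this
    have hcont : ContinuousOn (fun t : ℝ => f (o₀ + t • (k₀ - o₀))) (Set.Icc 0 1) := by
      fun_prop
    have hg0 : f (o₀ + (0:ℝ) • (k₀ - o₀)) < c := by simpa using hfO o₀ ho₀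
    have hg1 : c ≤ f (o₀ + (1:ℝ) • (k₀ - o₀)) := by simpa using hfK k₀ hk₀
    obtain ⟨t₀, ht₀mem, ht₀⟩ := intermediate_value_Icc (zero_le_one) hcont ⟨hg0.le, hg1⟩
    set a : E3 := o₀ + t₀ • (k₀ - o₀) with haa
    have ha1 : ‖a‖ < 1 := by
      have heq : a = (1 - t₀) • o₀ + t₀ • k₀ := by rw [haa]; module
      rw [heq]
      calc ‖(1 - t₀) • o₀ + t₀ • k₀‖ ≤ ‖(1 - t₀) • o₀‖ + ‖t₀ • k₀‖ := norm_add_le _ _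
        _ = (1 - t₀) * ‖o₀‖ + t₀ * ‖k₀‖ := by
            rw [norm_smul, norm_smul, Real.norm_eq_abs, Real.norm_eq_abs,
              abs_of_nonneg ht₀mem.1, abs_of_nonneg (by linarith [ht₀mem.2] : (0:ℝ) ≤ 1 - t₀)]
        _ < 1 := by
            rcases eq_or_lt_of_le ht₀mem.1 with h | h
            · rw [← h]; simpa using ho₀b
            · have h1 : t₀ * ‖k₀‖ < t₀ * 1 := by
                exact mul_lt_mul_of_pos_left hk₀b h
              have h2 : (1 - t₀) * ‖o₀‖ ≤ (1 - t₀) * 1 :=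
                mul_le_mul_of_nonneg_left ho₀b.le (by linarith [ht₀mem.2])
              linarith
    have hfa : f a = c := ht₀
    have haO : a ∉ O := fun h => absurd hfa (ne_of_lt (hfO a h))
    obtain ⟨h1, h2⟩ := key O hOconv hOopen (fun o ho => (hO ho).1) a ha1 haO
    refine ⟨_, h1, h2, ?_⟩
    ext x
    simp only [Set.mem_inter_iff, Set.mem_empty_iff_false, iff_false, not_and]
    rintro ⟨⟨o, ho, s, hs, rfl⟩, _⟩ hxK
    have hfx : f (a + s • (o - a)) = c + s * (f o - c) := by
      rw [map_add, map_smul, map_sub, smul_eq_mul, hfa]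
    have hfoc : f o < c := hfO o ho
    have : f (a + s • (o - a)) < c := by rw [hfx]; nlinarith
    linarith [hfK _ hxK]
end
end
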